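/- Let L be a computable learner which EX-succeeds on the uniform (Lebesgue) measure on Cantor space. Then for every binary string σ, setting e = L(σ), there exists n_σ > 2|σ| such that either μ_e(τ)[n_σ] is defined for all strings τ of length at most |σ|, or the proportion of strings τ of length n_σ extending σ such that L(ρ) = L(σ) for all ρ with σ ⊆ ρ ⊆ τ is less than 2^{-|σ|-5}. -/

import Mathlib

open scoped Classical

/-- Binary strings. -/
abbrev BinStr : Type := List Bool

/-- Cantor space: infinite binary sequences ("reals"). -/
abbrev CantorReal : Type := ℕ → Bool

/-- The length-`n` initial segment of a real. -/
def prefixOf (X : CantorReal) (n : ℕ) : BinStr := (List.range n).map X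

/-- A (representation of a) probability measure on Cantor space:
`val σ` is the measure of the basic open set `[σ]`. -/
structure MeasureRep where
  val : BinStr → ℝ
  nonneg : ∀ σ, 0 ≤ val σ
  empty_one : val [] = 1
  additive : ∀ σ : BinStr, val σ = val (σ ++ [false]) + val (σ ++ [true])

/-- A measure is computable if its values are uniformly approximable by rationals. -/
def ComputableMeasure (m : MeasureRep) : Prop :=
  ∃ q : BinStr → ℕ → ℚ, Computable₂ q ∧
    ∀ σ n, |(q σ n : ℝ) - m.val σ| ≤ (2:ℝ) ^ (-(n:ℤ))

/-- A measure is continuous (atomless) if every singleton has measure 0,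
i.e. the measures of the initial segments of any real tend to 0. -/
def ContinuousMeasure (m : MeasureRep) : Prop :=
  ∀ X : CantorReal, ∀ ε : ℝ, 0 < ε → ∃ n, m.val (prefixOf X n) < ε

/-- The uniform (Lebesgue) measure on Cantor space. -/
noncomputable def uniformMeasure : MeasureRep where
  val σ := (2:ℝ) ^ (-(σ.length : ℤ))
  nonneg σ := by positivity
  empty_one := by simp
  additive σ := by
    simp only [List.length_append, List.length_singleton]
    rw [← two_mul, show -((σ.length + 1 : ℕ) : ℤ) = -(σ.length : ℤ) + (-1) by push_cast; ring,
      zpow_add₀ (two_ne_zero) (-(σ.length:ℤ)) (-1)]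
    ring

/-- A finite set of strings is prefix-free (an antichain). -/
def PrefixFree (F : Finset BinStr) : Prop :=
  ∀ σ ∈ F, ∀ τ ∈ F, σ <+: τ → σ = τ

/-- The measure of the open set generated by a set of strings `U`:
the supremum of the measures of finite prefix-free subsets of `U`. -/
noncomputable def openMeas (m : MeasureRep) (U : Set BinStr) : ℝ :=
  sSup { x : ℝ | ∃ F : Finset BinStr, ↑F ⊆ U ∧ PrefixFree F ∧ x = ∑ σ ∈ F, m.val σ }

/-- A Martin-Löf test for `m`: a uniformly c.e. sequence of sets of strings whose
generated open sets have `m`-measure at most `2^{-i}`. -/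
def MLTest (m : MeasureRep) (U : ℕ → Set BinStr) : Prop :=
  REPred (fun p : ℕ × BinStr => p.2 ∈ U p.1) ∧
  ∀ i, openMeas m (U i) ≤ (2:ℝ) ^ (-(i:ℤ))

/-- Martin-Löf randomness of a real with respect to a measure. -/
def MLRandom (m : MeasureRep) (X : CantorReal) : Prop :=
  ∀ U : ℕ → Set BinStr, MLTest m U → ∃ i, ∀ n, prefixOf X n ∉ U i

/-- A standard effective enumeration `(μ_i)` of all partial computable measures,
together with its stagewise computation `conv` (`conv i s σ` holds iff `μ_i(σ)[s]↓`). -/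
structure MeasEnum where
  μ : ℕ → BinStr →. ℝ
  approx : ℕ → BinStr → ℕ →. ℚ
  approx_partrec : Partrec fun x : ℕ × BinStr × ℕ => approx x.1 x.2.1 x.2.2
  approx_dom : ∀ i σ n, (approx i σ n).Dom ↔ (μ i σ).Dom
  approx_close : ∀ i σ n, ∀ q ∈ approx i σ n, ∀ r ∈ μ i σ, |(q:ℝ) - r| ≤ (2:ℝ) ^ (-(n:ℤ))
  empty_dom : ∀ i, (μ i []).Dom
  empty_one : ∀ i, ∀ r ∈ μ i ([] : BinStr), r = (1:ℝ)
  nonneg : ∀ i σ, ∀ r ∈ μ i σ, (0:ℝ) ≤ r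
  down_closed : ∀ i (σ : BinStr) (j : Bool), (μ i (σ ++ [j])).Dom →
    ∀ τ : BinStr, τ.length ≤ σ.length + 1 → (μ i τ).Dom
  additive : ∀ i (σ : BinStr), ∀ r ∈ μ i σ, ∀ a ∈ μ i (σ ++ [false]), ∀ b ∈ μ i (σ ++ [true]),
    r = a + b
  conv : ℕ → ℕ → BinStr → Bool
  conv_computable : Computable fun x : ℕ × ℕ × BinStr => conv x.1 x.2.1 x.2.2
  conv_mono : ∀ i s t σ, s ≤ t → conv i s σ = true → conv i t σ = true
  conv_dom : ∀ i σ, (μ i σ).Dom ↔ ∃ s, conv i s σ = true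
  complete : ∀ m : MeasureRep, ComputableMeasure m → ∃ i, ∀ σ, μ i σ = Part.some (m.val σ)

/-- `μ_i` is total and equals the (computable) measure `m`. -/
def MeasEnum.TotalAt (E : MeasEnum) (i : ℕ) (m : MeasureRep) : Prop :=
  ∀ σ, E.μ i σ = Part.some (m.val σ)

/-- The limit of `L` along `X` exists and equals `i`. -/
def LimEq (L : BinStr → ℕ) (X : CantorReal) (i : ℕ) : Prop :=
  ∃ N, ∀ n ≥ N, L (prefixOf X n) = i

/-- The learner `L` EX-succeeds on the real `X`: the limit of `L` along `X` exists and is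
an index of a total computable measure with respect to which `X` is Martin-Löf random. -/
def EXSuccessAt (E : MeasEnum) (L : BinStr → ℕ) (X : CantorReal) : Prop :=
  ∃ i m, LimEq L X i ∧ E.TotalAt i m ∧ MLRandom m X

/-- The learner `L` EX-succeeds on the measure `m`. -/
def EXSucceedsOn (E : MeasEnum) (L : BinStr → ℕ) (m : MeasureRep) : Prop :=
  ∀ X : CantorReal, MLRandom m X → EXSuccessAt E L X

/-- Codes for oracle partial computable functions. -/
inductive OCode : Type
  | zero | succ | left | right | oracle
  | pair (a b : OCode) | comp (a b : OCode) | prec (a b : OCode) | rfind' (a : OCode)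

/-- Evaluation of an oracle code relative to the oracle `O`. -/
def OCode.eval (O : ℕ →. ℕ) : OCode → ℕ →. ℕ
  | .zero => fun _ => Part.some 0
  | .succ => fun n => Part.some (n + 1)
  | .left => fun n => Part.some (Nat.unpair n).1
  | .right => fun n => Part.some (Nat.unpair n).2
  | .oracle => O
  | .pair a b => fun n => Nat.pair <$> OCode.eval O a n <*> OCode.eval O b n
  | .comp a b => fun n => OCode.eval O b n >>= OCode.eval O a
  | .prec a b =>
    Nat.unpaired fun x y =>
      y.rec (OCode.eval O a x) fun y IH => do
        let i ← IH
        OCode.eval O b (Nat.pair x (Nat.pair y i))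
  | .rfind' a =>
    Nat.unpaired fun x m =>
      (Nat.rfind fun n => (fun v => v = 0) <$> OCode.eval O a (Nat.pair x (n + m))).map (· + m)

/-- A standard numbering of oracle codes. -/
def encodeOCode : OCode → ℕ
  | .zero => 0
  | .succ => 1
  | .left => 2
  | .right => 3
  | .oracle => 4
  | .pair a b => 4 * Nat.pair (encodeOCode a) (encodeOCode b) + 5
  | .comp a b => 4 * Nat.pair (encodeOCode a) (encodeOCode b) + 6
  | .prec a b => 4 * Nat.pair (encodeOCode a) (encodeOCode b) + 7
  | .rfind' a => 4 * encodeOCode a + 8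

/-- Characteristic function of a set of naturals. -/
noncomputable def chi (A : Set ℕ) : ℕ → ℕ := fun n => if n ∈ A then 1 else 0

/-- Characteristic function of a set, as an oracle. -/
noncomputable def chiO (A : Set ℕ) : ℕ →. ℕ := fun n => Part.some (chi A n)

/-- The Turing jump of a set. -/
def jump (A : Set ℕ) : Set ℕ :=
  { e | ∃ c : OCode, encodeOCode c = e ∧ (OCode.eval (chiO A) c e).Dom }

/-- Turing reducibility between sets of naturals. -/
def TuringLE (A B : Set ℕ) : Prop :=
  ∃ c : OCode, ∀ n, OCode.eval (chiO B) c n = Part.some (chi A n)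

/-- The effective join `A ⊕ B`. -/
def joinSet (A B : Set ℕ) : Set ℕ :=
  { n | (n % 2 = 0 ∧ n / 2 ∈ A) ∨ (n % 2 = 1 ∧ n / 2 ∈ B) }

/-- `f : ℕ → ℕ` is computable relative to the oracle `O`. -/
def FunComputableIn (f : ℕ → ℕ) (O : ℕ →. ℕ) : Prop :=
  ∃ c : OCode, ∀ n, OCode.eval O c n = Part.some (f n)

/-- A learner is computable relative to the oracle `O`. -/
def LearnerComputableIn (L : BinStr → ℕ) (O : ℕ →. ℕ) : Prop :=
  ∃ c : OCode, ∀ σ : BinStr, OCode.eval O c (Encodable.encode σ) = Part.some (L σ)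

/-- A learner, viewed as an oracle. -/
def learnerOracle (L : BinStr → ℕ) : ℕ →. ℕ :=
  fun n => Part.some ((Encodable.decode (α := BinStr) n).elim 0 L)

/-- A function `ℕ → ℕ`, viewed as an oracle. -/
def funOracle (f : ℕ → ℕ) : ℕ →. ℕ := fun n => Part.some (f n)

/-- `f` dominates every computable function. -/
def DominatesAllComputable (f : ℕ → ℕ) : Prop :=
  ∀ g : ℕ → ℕ, Computable g → ∃ N, ∀ n ≥ N, g n ≤ f n

/-- A prefix-free machine. -/
structure PrefixMachine where
  M : BinStr →. BinStr
  partrec : Partrec M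
  prefixFree : ∀ p q : BinStr, (M p).Dom → (M q).Dom → p <+: q → p = q

/-- `K` is (the complexity function of) an optimal universal prefix-free machine:
prefix-free Kolmogorov complexity. -/
def IsKolmogorov (K : BinStr → ℕ) : Prop :=
  ∃ U : PrefixMachine,
    (∀ σ : BinStr, ∃ p : BinStr, p.length = K σ ∧ σ ∈ U.M p) ∧
    (∀ σ p : BinStr, σ ∈ U.M p → K σ ≤ p.length) ∧
    (∀ N : PrefixMachine, ∃ c : ℕ, ∀ σ p : BinStr, σ ∈ N.M p → K σ ≤ p.length + c)

/-- The randomness deficiency function `d_e(σ) = -log μ_e(σ) - K(σ)` (partial). -/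
noncomputable def defic (E : MeasEnum) (K : BinStr → ℕ) (e : ℕ) (σ : BinStr) : Part ℝ :=
  (E.μ e σ).map fun x => -Real.logb 2 x - (K σ : ℝ)

/-- The `μ_e`-randomness deficiency of the real `X` is at most `b`:
every defined value `d_e(X↾n)` is at most `b`. -/
def DeficBoundedBy (E : MeasEnum) (K : BinStr → ℕ) (e : ℕ) (X : CantorReal) (b : ℝ) : Prop :=
  ∀ n : ℕ, ∀ r ∈ defic E K e (prefixOf X n), r ≤ b

/-- Value of a partial real, defaulting to `0`. -/
noncomputable def partVal (p : Part ℝ) : ℝ := if h : p.Dom then p.get h else 0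

/-- The minimal (with respect to the prefix order) strings of a finite set of strings. -/
def minimalStrings (D : Finset BinStr) : Finset BinStr :=
  D.filter fun σ => ∀ τ ∈ D, τ <+: σ → τ = σ

/-- `μ_e(D)` for an (explicitly given) finite set of strings `D`: defined iff `μ_e(σ)` is
defined for all `σ ∈ D`, with value the measure of the generated (clopen) set. -/
noncomputable def finsetMeas (E : MeasEnum) (e : ℕ) (D : List BinStr) : Part ℝ :=
  if ∀ σ ∈ D, (E.μ e σ).Dom
  then Part.some (∑ σ ∈ minimalStrings D.toFinset, partVal (E.μ e σ))
  else Part.none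

/-- A uniform sequence of clopen tests: `G i` is a clopen `μ_i`-test for each `i`,
uniformly partial computably in `i` (members are explicitly given finite sets of strings,
coded as lists). -/
def ClopenTestSeq (E : MeasEnum) (G : ℕ → ℕ →. List BinStr) : Prop :=
  (Partrec fun x : ℕ × ℕ => G x.1 x.2) ∧
  ∀ i j, (G i j).Dom → ∀ k ≤ j, (G i k).Dom ∧
    ∀ D ∈ G i k, ∃ r ∈ finsetMeas E i D, r ≤ (2:ℝ) ^ (-(k:ℤ))

/-- The time-complexity of `μ_i`: the least stage `s` by which `μ_i(σ)[s]↓` for all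
strings `σ` of length at most `n`. -/
noncomputable def timeCplx (E : MeasEnum) (i n : ℕ) : Part ℕ :=
  ⟨∃ s, ∀ σ : BinStr, σ.length ≤ n → E.conv i s σ = true, fun h => Nat.find h⟩

/-- The time-complexity of `μ_i` dominates `h`: it is total and exceeds `h(n)` for all but
finitely many `n`, or it is undefined from some point on. -/
def TimeDominates (E : MeasEnum) (i : ℕ) (h : ℕ → ℕ) : Prop :=
  ((∀ n, (timeCplx E i n).Dom) ∧ ∃ N, ∀ n ≥ N, ∀ s ∈ timeCplx E i n, h n < s) ∨
  (∃ N, ∀ n ≥ N, ¬ (timeCplx E i n).Dom)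

/-- `m` is relatively identical to the uniform measure for strings of length in `[a, b)`:
the conditional splitting ratios are `1/2` (stated in cross-multiplied form). -/
def RelIdUniform (m : MeasureRep) (a b : ℕ) : Prop :=
  ∀ σ : BinStr, ∀ j : Bool, a ≤ σ.length → σ.length < b →
    2 * m.val (σ ++ [j]) = m.val σ

/-- `m` is a `p`-sparse measure. -/
def PSparseMeasure (m : MeasureRep) (p : ℕ → ℕ) : Prop :=
  ∃ ns : ℕ → ℕ, (∀ i, p (ns i) < ns (i + 1)) ∧
    ∀ i, RelIdUniform m (ns i + 1) (ns (i + 1) + 1)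

/-- The set of reals avoiding every string in `U` (a closed, Π⁰₁-style class when `U` is c.e.). -/
def avoidSet (U : Set BinStr) : Set CantorReal := { X | ∀ n, prefixOf X n ∉ U }

/-- Outer measure of a set of reals induced by a measure representation. -/
noncomputable def outerMeas (m : MeasureRep) (S : Set CantorReal) : ℝ :=
  sInf { x : ℝ | ∃ U : Set BinStr, (∀ X ∈ S, ∃ n, prefixOf X n ∈ U) ∧ x = openMeas m U }

/-- Inner measure of a set of reals induced by a measure representation. -/
noncomputable def innerMeas (m : MeasureRep) (S : Set CantorReal) : ℝ :=
  sSup { x : ℝ | ∃ U : Set BinStr, avoidSet U ⊆ S ∧ x = 1 - openMeas m U }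

/-- Evaluation of an oracle code which additionally records the (finite) set of
oracle queries made during the computation. -/
def OCode.evalQ (O : ℕ →. ℕ) : OCode → ℕ →. (ℕ × Finset ℕ)
  | .zero => fun _ => Part.some (0, ∅)
  | .succ => fun n => Part.some (n + 1, ∅)
  | .left => fun n => Part.some ((Nat.unpair n).1, ∅)
  | .right => fun n => Part.some ((Nat.unpair n).2, ∅)
  | .oracle => fun n => (O n).map fun v => (v, {n})
  | .pair a b => fun n => do
      let x ← OCode.evalQ O a n
      let y ← OCode.evalQ O b n
      Part.some (Nat.pair x.1 y.1, x.2 ∪ y.2)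
  | .comp a b => fun n => do
      let x ← OCode.evalQ O b n
      let y ← OCode.evalQ O a x.1
      Part.some (y.1, x.2 ∪ y.2)
  | .prec a b =>
    Nat.unpaired fun x y =>
      y.rec (OCode.evalQ O a x) fun y IH => do
        let i ← IH
        let r ← OCode.evalQ O b (Nat.pair x (Nat.pair y i.1))
        Part.some (r.1, i.2 ∪ r.2)
  | .rfind' a =>
    Nat.unpaired fun x m => do
      let n ← Nat.rfind fun n => (fun p => p.1 = 0) <$> OCode.evalQ O a (Nat.pair x (n + m))
      let l ← (List.range (n + 1)).mapM fun k => OCode.evalQ O a (Nat.pair x (k + m))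
      Part.some (n + m, l.foldl (fun s p => s ∪ p.2) ∅)

/-! If `μ_{L(σ)}` is defined on all strings of length at most `|σ|`, these finitely many
computations have converged by some stage. Otherwise `L(σ)` is not an index of a total measure,
so no real along which the guess `L(σ)` persists from `σ` on can be Martin-Löf random. All such
reals then lie in `nonrandomCover k`, the union of the `(k + c + 1)`-th levels of all tests `c`,
an open set of uniform measure at most `2^{-k}`. The persistent reals form a closed set, so by
compactness of Cantor space there is a length beyond which every persistent string already has a
prefix in that open set; Kraft's inequality then bounds their proportion by `2^{-k}`. -/

open Filter

lemma prefixOf_length (X : CantorReal) (n : ℕ) : (prefixOf X n).length = n := by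
  simp [prefixOf]

lemma prefixOf_succ (X : CantorReal) (n : ℕ) : prefixOf X (n + 1) = prefixOf X n ++ [X n] := by
  simp [prefixOf, List.range_succ]

lemma prefixOf_eq_ofFn (X : CantorReal) (n : ℕ) :
    prefixOf X n = List.ofFn fun i : Fin n => X i := by
  apply List.ext_getElem <;> simp [prefixOf]

lemma prefixOf_getD (τ : BinStr) : prefixOf (fun i => τ.getD i false) τ.length = τ := by
  apply List.ext_getElem
  · simp [prefixOf]
  · intro i _ h
    simp [prefixOf, h]

/-- Kőnig's lemma for binary trees. -/
theorem exists_forall_prefixOf_mem {T : Set BinStr} (hT : ∀ τ τ', τ <+: τ' → τ' ∈ T → τ ∈ T)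
    (hne : ∀ n, ∃ τ ∈ T, τ.length = n) : ∃ X : CantorReal, ∀ n, prefixOf X n ∈ T := by
  let level (n : ℕ) : Set CantorReal := {X | prefixOf X n ∈ T}
  have hclosed (n : ℕ) : IsClosed (level n) := by
    have : level n = (fun X (i : Fin n) => X i) ⁻¹' {v | List.ofFn v ∈ T} := by
      ext X; simp [level, prefixOf_eq_ofFn]
    rw [this]
    exact (isClosed_discrete _).preimage (continuous_pi fun i => continuous_apply _)
  have hanti (n : ℕ) : level (n + 1) ⊆ level n := fun X hX =>
    hT _ _ (by rw [prefixOf_succ]; exact List.prefix_append _ _) hX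
  have hnonempty (n : ℕ) : (level n).Nonempty := by
    obtain ⟨τ, hτT, rfl⟩ := hne n
    exact ⟨_, (prefixOf_getD τ).symm ▸ hτT⟩
  obtain ⟨X, hX⟩ := IsCompact.nonempty_iInter_of_sequence_nonempty_isCompact_isClosed
    level hanti hnonempty (hclosed 0).isCompact hclosed
  exact ⟨X, Set.mem_iInter.1 hX⟩

theorem exists_length_forall_prefix_mem {T W : Set BinStr}
    (hT : ∀ τ τ', τ <+: τ' → τ' ∈ T → τ ∈ T)
    (hW : ∀ X : CantorReal, (∀ n, prefixOf X n ∈ T) → ∃ n, prefixOf X n ∈ W) :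
    ∃ n₀, ∀ τ ∈ T, n₀ ≤ τ.length → ∃ ρ ∈ W, ρ <+: τ := by
  by_contra! h
  let T' : Set BinStr := {τ | τ ∈ T ∧ ∀ ρ ∈ W, ¬ρ <+: τ}
  have hT' : ∀ τ τ', τ <+: τ' → τ' ∈ T' → τ ∈ T' := fun τ τ' hττ' ⟨hτ'T, hτ'W⟩ =>
    ⟨hT τ τ' hττ' hτ'T, fun ρ hρ hρτ => hτ'W ρ hρ (hρτ.trans hττ')⟩
  have hne : ∀ n, ∃ τ ∈ T', τ.length = n := fun n => by
    obtain ⟨τ, hτT, hnτ, hτW⟩ := h n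
    exact ⟨τ.take n, hT' _ τ (List.take_prefix n τ) ⟨hτT, hτW⟩, by simpa using hnτ⟩
  obtain ⟨X, hX⟩ := exists_forall_prefixOf_mem hT' hne
  obtain ⟨n, hn⟩ := hW X fun n => (hX n).1
  exact (hX n).2 _ hn (List.prefix_refl _)

def cylinder (ρ : BinStr) (n : ℕ) : Finset (Fin n → Bool) :=
  Finset.univ.filter fun v => ρ <+: List.ofFn v

lemma card_cylinder_length_add (ρ : BinStr) (m : ℕ) :
    (cylinder ρ (ρ.length + m)).card = 2 ^ m := by
  have hcard : (Finset.univ : Finset (Fin m → Bool)).card = 2 ^ m := by simp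
  rw [← hcard]
  refine Finset.card_nbij' (fun v j => v (Fin.natAdd _ j)) (fun w => Fin.append ρ.get w)
    (fun _ _ => Finset.mem_coe.2 (Finset.mem_univ _)) (fun w _ => ?_) (fun v hv => ?_)
    (fun w _ => ?_)
  · simp [cylinder, List.ofFn_get]
  · have hv : ρ <+: List.ofFn v := (Finset.mem_filter.1 hv).2
    rw [List.ofFn_add] at hv
    have hρ : ρ = List.ofFn fun i => v (Fin.castAdd m i) :=
      (List.prefix_of_prefix_length_le hv (List.prefix_append _ _) (by simp)).eq_of_length
        (by simp)
    have hget : ρ.get = fun i => v (Fin.castAdd m i) :=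
      List.ofFn_injective ((List.ofFn_get ρ).trans hρ)
    simp only [hget, Fin.append_castAdd_natAdd]
  · funext j
    simp [Fin.append_right]

lemma card_cylinder_mul_zpow {ρ : BinStr} {n : ℕ} (h : ρ.length ≤ n) :
    ((cylinder ρ n).card : ℝ) * 2 ^ (-(n : ℤ)) = uniformMeasure.val ρ := by
  obtain ⟨m, rfl⟩ := Nat.exists_eq_add_of_le h
  rw [card_cylinder_length_add, Nat.cast_pow, Nat.cast_ofNat, ← zpow_natCast,
    ← zpow_add₀ two_ne_zero]
  change _ = (2 : ℝ) ^ (-(ρ.length : ℤ))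
  congr 1
  push_cast
  ring

/-- Kraft's inequality. -/
lemma sum_uniform_le_one {F : Finset BinStr} (hF : PrefixFree F) :
    ∑ ρ ∈ F, uniformMeasure.val ρ ≤ 1 := by
  set n := F.sup List.length
  have hlen : ∀ ρ ∈ F, ρ.length ≤ n := fun ρ hρ => Finset.le_sup (f := List.length) hρ
  have hdisj : (F : Set BinStr).PairwiseDisjoint (cylinder · n) := by
    intro x hx y hy hxy
    refine Finset.disjoint_left.2 fun v hvx hvy => hxy ?_
    rcases List.prefix_or_prefix_of_prefix (Finset.mem_filter.1 hvx).2
      (Finset.mem_filter.1 hvy).2 with h | h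
    · exact hF x hx y hy h
    · exact (hF y hy x hx h).symm
  calc ∑ ρ ∈ F, uniformMeasure.val ρ
      = ((F.biUnion (cylinder · n)).card : ℝ) * 2 ^ (-(n : ℤ)) := by
        rw [Finset.card_biUnion hdisj, Nat.cast_sum, Finset.sum_mul]
        exact Finset.sum_congr rfl fun ρ hρ => (card_cylinder_mul_zpow (hlen ρ hρ)).symm
    _ ≤ (Fintype.card (Fin n → Bool) : ℝ) * 2 ^ (-(n : ℤ)) := by
        gcongr
        exact Finset.card_le_univ _
    _ = 1 := by simp [zpow_neg]

lemma sum_le_openMeas_uniform {F : Finset BinStr} {W : Set BinStr} (hFW : ↑F ⊆ W)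
    (hF : PrefixFree F) : ∑ ρ ∈ F, uniformMeasure.val ρ ≤ openMeas uniformMeasure W :=
  le_csSup ⟨1, by rintro x ⟨G, -, hG, rfl⟩; exact sum_uniform_le_one hG⟩ ⟨F, hFW, hF, rfl⟩

lemma openMeas_uniform_nonneg (W : Set BinStr) : 0 ≤ openMeas uniformMeasure W := by
  simpa using sum_le_openMeas_uniform (F := ∅) (W := W) (by simp) (by simp [PrefixFree])

lemma prefixFree_minimalStrings (D : Finset BinStr) : PrefixFree (minimalStrings D) :=
  fun σ hσ _ hτ hστ => (Finset.mem_filter.1 hτ).2 σ (Finset.mem_filter.1 hσ).1 hστ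

lemma exists_mem_minimalStrings_prefix {D : Finset BinStr} {τ : BinStr} (hτ : τ ∈ D) :
    ∃ ρ ∈ minimalStrings D, ρ <+: τ := by
  obtain ⟨ρ, hρ, hmin⟩ := (D.filter (· <+: τ)).exists_min_image List.length
    ⟨τ, Finset.mem_filter.2 ⟨hτ, List.prefix_refl τ⟩⟩
  rw [Finset.mem_filter] at hρ
  refine ⟨ρ, Finset.mem_filter.2 ⟨hρ.1, fun ρ' hρ' hρ'ρ => ?_⟩, hρ.2⟩
  exact hρ'ρ.eq_of_length
    (hρ'ρ.length_le.antisymm (hmin ρ' (Finset.mem_filter.2 ⟨hρ', hρ'ρ.trans hρ.2⟩)))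

lemma card_mul_zpow_le_openMeas {n : ℕ} {W : Set BinStr} (P : Finset (Fin n → Bool))
    (hP : ∀ v ∈ P, ∃ ρ ∈ W, ρ <+: List.ofFn v) :
    (P.card : ℝ) * 2 ^ (-(n : ℤ)) ≤ openMeas uniformMeasure W := by
  let D : Finset BinStr := (P.biUnion fun v => (List.ofFn v).inits.toFinset).filter (· ∈ W)
  have hD : ∀ ρ, ρ ∈ D ↔ (∃ v ∈ P, ρ <+: List.ofFn v) ∧ ρ ∈ W := by simp [D]
  let F := minimalStrings D
  have hFD : F ⊆ D := Finset.filter_subset _ _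
  have hlen : ∀ ρ ∈ F, ρ.length ≤ n := fun ρ hρ => by
    obtain ⟨v, -, hρv⟩ := ((hD ρ).1 (hFD hρ)).1
    simpa using hρv.length_le
  have hcover : P ⊆ F.biUnion (cylinder · n) := fun v hv => by
    obtain ⟨ρ, hρW, hρv⟩ := hP v hv
    obtain ⟨ρ', hρ', hρ'ρ⟩ := exists_mem_minimalStrings_prefix ((hD ρ).2 ⟨⟨v, hv, hρv⟩, hρW⟩)
    exact Finset.mem_biUnion.2 ⟨ρ', hρ', Finset.mem_filter.2 ⟨Finset.mem_univ _, hρ'ρ.trans hρv⟩⟩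
  calc (P.card : ℝ) * 2 ^ (-(n : ℤ))
      ≤ ((F.biUnion (cylinder · n)).card : ℝ) * 2 ^ (-(n : ℤ)) := by gcongr
    _ ≤ ∑ ρ ∈ F, ((cylinder ρ n).card : ℝ) * 2 ^ (-(n : ℤ)) := by
        rw [← Finset.sum_mul]
        gcongr
        exact_mod_cast Finset.card_biUnion_le
    _ = ∑ ρ ∈ F, uniformMeasure.val ρ :=
        Finset.sum_congr rfl fun ρ hρ => card_cylinder_mul_zpow (hlen ρ hρ)
    _ ≤ openMeas uniformMeasure W :=
        sum_le_openMeas_uniform (fun ρ hρ => ((hD ρ).1 (hFD hρ)).2) (prefixFree_minimalStrings D)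

lemma openMeas_uniform_iUnion_le (W : ℕ → Set BinStr) {ε : ℝ}
    (hW : ∀ c, openMeas uniformMeasure (W c) ≤ ε / 2 ^ (c + 1)) :
    openMeas uniformMeasure (⋃ c, W c) ≤ ε := by
  have hε : 0 ≤ ε := by linarith [(openMeas_uniform_nonneg (W 0)).trans (hW 0)]
  refine csSup_le ⟨0, ∅, by simp, by simp [PrefixFree], by simp⟩ ?_
  rintro x ⟨F, hFW, hF, rfl⟩
  choose! idx hidx using fun ρ (hρ : ρ ∈ F) => Set.mem_iUnion.1 (hFW hρ)
  calc ∑ ρ ∈ F, uniformMeasure.val ρ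
      = ∑ c ∈ F.image idx, ∑ ρ ∈ F with idx ρ = c, uniformMeasure.val ρ :=
        (Finset.sum_fiberwise_of_maps_to (fun ρ hρ => Finset.mem_image_of_mem _ hρ) _).symm
    _ ≤ ∑ c ∈ F.image idx, ε / 2 ^ (c + 1) := by
        refine Finset.sum_le_sum fun c _ => (sum_le_openMeas_uniform ?_ ?_).trans (hW c)
        · intro ρ hρ
          obtain ⟨hρF, rfl⟩ := Finset.mem_filter.1 hρ
          exact hidx ρ hρF
        · exact fun σ hσ τ hτ => hF σ (Finset.mem_filter.1 hσ).1 τ (Finset.mem_filter.1 hτ).1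
    _ ≤ ∑' c, ε / 2 ^ (c + 1) :=
        (summable_geometric_two' ε).congr (fun c => by ring) |>.sum_le_tsum _
          fun _ _ => by positivity
    _ = ε := by simpa [pow_succ, div_div, mul_comm] using tsum_geometric_two' ε

def ceFamily (c i : ℕ) : Set BinStr :=
  {σ | ((Denumerable.ofNat Nat.Partrec.Code c).eval (Encodable.encode (i, σ))).Dom}

lemma exists_ceFamily_eq {U : ℕ → Set BinStr} (hU : REPred fun p : ℕ × BinStr => p.2 ∈ U p.1) :
    ∃ c, ceFamily c = U := by
  obtain ⟨c, hc⟩ := Nat.Partrec.Code.exists_code.1 hU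
  refine ⟨Encodable.encode c, funext fun i => Set.ext fun σ => ?_⟩
  simp [ceFamily, hc, Encodable.encodek, Part.assert]

lemma openMeas_empty (m : MeasureRep) : openMeas m ∅ = 0 := by
  simp [openMeas, PrefixFree]

def nonrandomCover (k : ℕ) : Set BinStr :=
  ⋃ c, {ρ | MLTest uniformMeasure (ceFamily c) ∧ ρ ∈ ceFamily c (k + c + 1)}

lemma exists_prefixOf_mem_nonrandomCover {X : CantorReal} (hX : ¬MLRandom uniformMeasure X)
    (k : ℕ) : ∃ n, prefixOf X n ∈ nonrandomCover k := by
  simp only [MLRandom, not_forall, not_exists, not_not] at hX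
  obtain ⟨U, hU, hXU⟩ := hX
  obtain ⟨c, rfl⟩ := exists_ceFamily_eq hU.1
  obtain ⟨n, hn⟩ := hXU (k + c + 1)
  exact ⟨n, Set.mem_iUnion.2 ⟨c, hU, hn⟩⟩

lemma openMeas_nonrandomCover_le (k : ℕ) :
    openMeas uniformMeasure (nonrandomCover k) ≤ 2 ^ (-(k : ℤ)) := by
  refine openMeas_uniform_iUnion_le _ fun c => ?_
  by_cases hc : MLTest uniformMeasure (ceFamily c)
  · simp only [hc, true_and, Set.ofPred_mem_eq]
    calc openMeas uniformMeasure (ceFamily c (k + c + 1))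
        ≤ 2 ^ (-((k + c + 1 : ℕ) : ℤ)) := hc.2 _
      _ = 2 ^ (-(k : ℤ)) / 2 ^ (c + 1) := by
        rw [div_eq_mul_inv, ← zpow_natCast, ← zpow_neg, ← zpow_add₀ two_ne_zero]
        push_cast
        ring_nf
  · simp only [hc, false_and, Set.ofPred_false, openMeas_empty]
    positivity

/-- The disjunct `τ <+: σ` makes persistence closed under prefixes. -/
def Persists (L : BinStr → ℕ) (σ τ : BinStr) : Prop :=
  (τ <+: σ ∨ σ <+: τ) ∧ ∀ ρ : BinStr, σ <+: ρ → ρ <+: τ → L ρ = L σ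

namespace Persists

variable {L : BinStr → ℕ} {σ τ τ' : BinStr}

lemma of_prefix (h : Persists L σ τ') (hττ' : τ <+: τ') : Persists L σ τ :=
  ⟨h.1.elim (fun hτ'σ => Or.inl (hττ'.trans hτ'σ)) (List.prefix_or_prefix_of_prefix hττ'),
    fun ρ hσρ hρτ => h.2 ρ hσρ (hρτ.trans hττ')⟩

lemma prefix_of_length_le (h : Persists L σ τ) (hl : σ.length ≤ τ.length) : σ <+: τ :=
  h.1.elim (fun hτσ => (hτσ.eq_of_length (hτσ.length_le.antisymm hl)) ▸ List.prefix_refl τ) id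

end Persists

lemma eventually_conv_of_dom {E : MeasEnum} {e k : ℕ}
    (h : ∀ τ : BinStr, τ.length ≤ k → (E.μ e τ).Dom) :
    ∀ᶠ s in atTop, ∀ τ : BinStr, τ.length ≤ k → E.conv e s τ = true := by
  refine (eventually_all_finite (List.finite_length_le Bool k)).2 fun τ hτ => ?_
  obtain ⟨s, hs⟩ := (E.conv_dom e τ).1 (h τ hτ)
  exact eventually_atTop.2 ⟨s, fun t ht => E.conv_mono e s t τ ht hs⟩

lemma not_mlRandom_of_forall_persists {E : MeasEnum} {L : BinStr → ℕ}
    (hs : EXSucceedsOn E L uniformMeasure) {σ τ₀ : BinStr} (hτ₀ : ¬(E.μ (L σ) τ₀).Dom)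
    {X : CantorReal} (hX : ∀ n, Persists L σ (prefixOf X n)) : ¬MLRandom uniformMeasure X := by
  intro hrand
  obtain ⟨i, m, ⟨N, hN⟩, htot, -⟩ := hs X hrand
  let n := max N σ.length
  have hσX : σ <+: prefixOf X n :=
    (hX n).prefix_of_length_le (by simp [prefixOf_length, n])
  have hi : L σ = i := ((hX n).2 _ hσX (List.prefix_refl _)).symm.trans (hN n (le_max_left _ _))
  exact hτ₀ (hi ▸ htot τ₀ ▸ trivial)

theorem exists_card_mul_zpow_le_of_persists {E : MeasEnum} {L : BinStr → ℕ}
    (hs : EXSucceedsOn E L uniformMeasure) {σ τ₀ : BinStr} (hτ₀ : ¬(E.μ (L σ) τ₀).Dom)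
    (k : ℕ) : ∃ n₀, ∀ n ≥ n₀, ∀ P : Finset (Fin n → Bool),
      (∀ v ∈ P, Persists L σ (List.ofFn v)) → (P.card : ℝ) * 2 ^ (-(n : ℤ)) ≤ 2 ^ (-(k : ℤ)) := by
  obtain ⟨n₀, hn₀⟩ := exists_length_forall_prefix_mem (T := {τ | Persists L σ τ})
    (W := nonrandomCover k) (fun _ _ hττ' hτ' => Persists.of_prefix hτ' hττ')
    (fun X hX => exists_prefixOf_mem_nonrandomCover (not_mlRandom_of_forall_persists hs hτ₀ hX) k)
  refine ⟨n₀, fun n hn P hP => ?_⟩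
  refine (card_mul_zpow_le_openMeas P fun v hv => ?_).trans (openMeas_nonrandomCover_le k)
  exact hn₀ _ (hP v hv) (by simpa using hn)

lemma lt_zpow_of_mul_zpow_le {x : ℝ} {n s : ℕ}
    (h : x * 2 ^ (-(n : ℤ)) ≤ 2 ^ (-((2 * s + 6 : ℕ) : ℤ))) :
    x < (2 : ℝ) ^ ((n : ℤ) - s) * 2 ^ (-(s : ℤ) - 5) := by
  calc x ≤ 2 ^ (-((2 * s + 6 : ℕ) : ℤ)) * 2 ^ (n : ℤ) := by
        have := mul_le_mul_of_nonneg_right h (zpow_nonneg zero_le_two (n : ℤ))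
        rwa [mul_assoc, ← zpow_add₀ two_ne_zero, neg_add_cancel, zpow_zero, mul_one] at this
    _ = (2 : ℝ) ^ ((n : ℤ) - s + (-(s : ℤ) - 5) - 1) := by
        rw [← zpow_add₀ two_ne_zero]
        push_cast
        ring_nf
    _ < (2 : ℝ) ^ ((n : ℤ) - s + (-(s : ℤ) - 5)) := zpow_lt_zpow_right₀ one_lt_two (by omega)
    _ = (2 : ℝ) ^ ((n : ℤ) - s) * 2 ^ (-(s : ℤ) - 5) := zpow_add₀ two_ne_zero _ _

theorem convergence_or_small_persistence_general (E : MeasEnum) (L : BinStr → ℕ)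
    (hs : EXSucceedsOn E L uniformMeasure) :
    ∀ σ : BinStr, ∃ nσ : ℕ, 2 * σ.length < nσ ∧
      ((∀ τ : BinStr, τ.length ≤ σ.length → E.conv (L σ) nσ τ = true) ∨
        ((Finset.univ.filter fun v : Fin nσ → Bool =>
            σ <+: List.ofFn v ∧
            ∀ ρ : BinStr, σ <+: ρ → ρ <+: List.ofFn v → L ρ = L σ).card : ℝ) <
          (2:ℝ) ^ ((nσ : ℤ) - σ.length) * (2:ℝ) ^ (-(σ.length : ℤ) - 5)) := by
  intro σ
  by_cases hdom : ∀ τ : BinStr, τ.length ≤ σ.length → (E.μ (L σ) τ).Dom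
  · obtain ⟨n, hconv, hn⟩ :=
      ((eventually_conv_of_dom hdom).and (eventually_gt_atTop (2 * σ.length))).exists
    exact ⟨n, hn, Or.inl hconv⟩
  · push Not at hdom
    obtain ⟨τ₀, -, hτ₀⟩ := hdom
    obtain ⟨n₀, hn₀⟩ := exists_card_mul_zpow_le_of_persists hs hτ₀ (2 * σ.length + 6)
    let n := max n₀ (2 * σ.length + 1)
    refine ⟨n, by omega, Or.inr (lt_zpow_of_mul_zpow_le (hn₀ n (le_max_left _ _) _ ?_))⟩
    intro v hv
    obtain ⟨hσv, hpers⟩ := (Finset.mem_filter.1 hv).2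
    exact ⟨Or.inr hσv, hpers⟩

/-- If a computable learner `L` EX-succeeds on the uniform measure, then for
every string `σ`, with `e = L(σ)`, there is `n_σ > 2|σ|` such that either `μ_e(τ)[n_σ]↓` for all
`τ` of length at most `|σ|`, or the proportion of extensions `τ` of `σ` of length `n_σ` on which
the prediction `L(σ)` persists is less than `2^{-|σ|-5}`. -/
theorem convergence_or_small_persistence (E : MeasEnum) (L : BinStr → ℕ) (hL : Computable L)
    (hs : EXSucceedsOn E L uniformMeasure) :
    ∀ σ : BinStr, ∃ nσ : ℕ, 2 * σ.length < nσ ∧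
      ((∀ τ : BinStr, τ.length ≤ σ.length → E.conv (L σ) nσ τ = true) ∨
        ((Finset.univ.filter fun v : Fin nσ → Bool =>
            σ <+: List.ofFn v ∧
            ∀ ρ : BinStr, σ <+: ρ → ρ <+: List.ofFn v → L ρ = L σ).card : ℝ) <
          (2:ℝ) ^ ((nσ : ℤ) - σ.length) * (2:ℝ) ^ (-(σ.length : ℤ) - 5)) :=
  convergence_or_small_persistence_general E L hs
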